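/- arXiv:2110.02769 — 5 statements merged into one kernel-verified Lean document; each statement's English description precedes it below -/
import Mathlib

section
/- Let ⊏ be a strict partial order on a set E that is an interval order (i.e., a ⊏ b and c ⊏ d imply a ⊏ d or c ⊏ b), and let ≺ be a relation on E satisfying the well-formedness condition: whenever e ≺⁺ e' (transitive closure), it is not the case that e' ⊑ e (reflexive closure of ⊏, i.e., neither e' = e nor e' ⊏ e). Then the happens-before relation ⊲, defined as the transitive closure of ⊏ ∪ ≺, is irreflexive. -/
/-!
Every `(⊏ ∪ ≺)`-path from `a` to `b` has a normal form: either it is a pure `≺⁺`-path, or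
`a ≺* x ⊏ y ≺* b` with a single `⊏`-step. Appending a `≺`-step is immediate; appending a
`⊏`-step `b ⊏ c` to `x ⊏ y ≺* b` uses the interval-order property on `x ⊏ y` and `b ⊏ c`:
the alternative `b ⊏ y` is excluded by well-formedness, so `x ⊏ c`. A cycle `a ⊲ a` in normal
form gives either `a ≺⁺ a` or `y ≺* x ⊏ y`, both forbidden by well-formedness.
-/

open Relation

section

variable {E : Type*} {rb prec : E → E → Prop}

theorem not_rb_of_reflTransGen (hirr : ∀ e, ¬ rb e e)
    (hwf : ∀ e e', TransGen prec e e' → ¬ (e' = e ∨ rb e' e)) {e e' : E}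
    (h : ReflTransGen prec e e') : ¬ rb e' e := by
  rcases reflTransGen_iff_eq_or_transGen.mp h with rfl | h
  · exact hirr e'
  · exact fun hrb => hwf e e' h (Or.inr hrb)

theorem transGen_rb_or_prec_normalForm
    (hinterval : ∀ a b c d, rb a b → rb c d → rb a d ∨ rb c b)
    (hwf : ∀ {e e'}, ReflTransGen prec e e' → ¬ rb e' e) {a b : E}
    (h : TransGen (fun a b => rb a b ∨ prec a b) a b) :
    TransGen prec a b ∨ ∃ x y, ReflTransGen prec a x ∧ rb x y ∧ ReflTransGen prec y b := by
  induction h with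
  | single hab =>
    rcases hab with hrb | hprec
    · exact Or.inr ⟨_, _, .refl, hrb, .refl⟩
    · exact Or.inl (.single hprec)
  | @tail b c _ hbc ih =>
    rcases hbc with hrb | hprec
    · rcases ih with hab | ⟨x, y, hax, hxy, hyb⟩
      · exact Or.inr ⟨b, c, hab.to_reflTransGen, hrb, .refl⟩
      · rcases hinterval x y b c hxy hrb with hxc | hby
        · exact Or.inr ⟨x, c, hax, hxc, .refl⟩
        · exact absurd hby (hwf hyb)
    · rcases ih with hab | ⟨x, y, hax, hxy, hyb⟩
      · exact Or.inl (hab.tail hprec)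
      · exact Or.inr ⟨x, y, hax, hxy, hyb.tail hprec⟩

end

theorem happensBefore_irreflexive_general {E : Type*} (rb prec : E → E → Prop)
    (hirr : Irreflexive rb)
    (hinterval : ∀ a b c d, rb a b → rb c d → rb a d ∨ rb c b)
    (hwf : ∀ e e', Relation.TransGen prec e e' → ¬ (e' = e ∨ rb e' e)) :
    Irreflexive (Relation.TransGen (fun a b => rb a b ∨ prec a b)) := by
  have hwf' : ∀ {e e'}, ReflTransGen prec e e' → ¬ rb e' e :=
    not_rb_of_reflTransGen hirr hwf
  intro a h
  rcases transGen_rb_or_prec_normalForm hinterval hwf' h with hprec | ⟨x, y, hax, hxy, hya⟩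
  · exact hwf a a hprec (Or.inl rfl)
  · exact hwf' (hya.trans hax) hxy

/-- If `⊏` is an interval order (a strict partial order satisfying the
interval-order property), and `≺` satisfies the well-formedness condition
(`e ≺⁺ e'` implies `¬ (e' ⊑ e)` where `⊑` is the reflexive closure of `⊏`),
then happens-before `⊲ = (⊏ ∪ ≺)⁺` is irreflexive. -/
theorem happensBefore_irreflexive {E : Type*} (rb prec : E → E → Prop)
    (hirr : Irreflexive rb) (htrans : Transitive rb)
    (hinterval : ∀ a b c d, rb a b → rb c d → rb a d ∨ rb c b)
    (hwf : ∀ e e', Relation.TransGen prec e e' → ¬ (e' = e ∨ rb e' e)) :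
    Irreflexive (Relation.TransGen (fun a b => rb a b ∨ prec a b)) :=
  happensBefore_irreflexive_general rb prec hirr hinterval hwf
end

section
/- The writer order ⊲_w, defined as the transitive closure of happens-before ⊲ together with the cross-index relation wrDiff (where w_i wrDiff w'_j holds iff i ≠ j and there exist a write w_j and a scan s with w_i rf s, w_j rf s, and w_j ⊲ w'_j), is a strict partial order (irreflexive and transitive) on the writes of a history satisfying the Snapshot signature. -/
/-! Say that a scan `s` sees a write `w` of index `i` if at index `i` it reads `w` or a
write that happens after `w`. No-write-between (for `⊲`-steps) and monotonicity (for
`wrDiff`-steps), together with write-totality, make "being seen by `s`" downward closed along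
every writer-order step between writes, while the scan witnessing `w wrDiff w'` sees `w` but not
`w'`. Hence along a writer-order path between writes either every step is a `⊲`-step, or some
scan sees the start but not the end; both exclude cycles. Since `⊲` is transitive, a cycle through
events that are not writes can be shortcut to one through writes only. -/

/-- The cross-index relation: `w wrDiff w'` holds iff `w` is a write of index
`i`, `w'` a write of index `j ≠ i`, and there exist a write `wj` of index `j`
and a scan `s` with `w rf s`, `wj rf s` and `wj ⊲ w'`. -/
def wrDiff {E ι : Type*} (Wr : ι → Set E) (Sc : Set E)
    (rf hb : E → E → Prop) (w w' : E) : Prop :=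
  ∃ i j, i ≠ j ∧ w ∈ Wr i ∧ w' ∈ Wr j ∧
    ∃ wj ∈ Wr j, ∃ s ∈ Sc, rf w s ∧ rf wj s ∧ hb wj w'

namespace Relation

variable {α : Type*} {r d : α → α → Prop} {P : α → Prop} {a b : α}

theorem TransGen.or_exists_restrict_of_sup [IsTrans α r] (hd : ∀ x y, d x y → P x ∧ P y)
    (h : TransGen (fun x y => r x y ∨ d x y) a b) (ha : P a) :
    r a b ∨ ∃ c, P c ∧ TransGen (fun x y => P x ∧ P y ∧ (r x y ∨ d x y)) a c ∧
      (c = b ∨ r c b) := by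
  induction h with
  | single hab =>
    rcases hab with hab | hab
    · exact .inl hab
    · exact .inr ⟨_, (hd _ _ hab).2, .single ⟨ha, (hd _ _ hab).2, .inr hab⟩, .inl rfl⟩
  | @tail b c _ hbc ih =>
    rcases hbc with hbc | hbc
    · rcases ih with hab | ⟨e, he, hae, heb⟩
      · exact .inl (_root_.trans hab hbc)
      · exact .inr ⟨e, he, hae, .inr (heb.elim (· ▸ hbc) (_root_.trans · hbc))⟩
    · obtain ⟨hPb, hPc⟩ := hd _ _ hbc
      have hstep : TransGen (fun x y => P x ∧ P y ∧ (r x y ∨ d x y)) b c :=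
        .single ⟨hPb, hPc, .inr hbc⟩
      refine .inr ⟨c, hPc, ?_, .inl rfl⟩
      rcases ih with hab | ⟨e, he, hae, rfl | heb⟩
      · exact hstep.head ⟨ha, hPb, .inl hab⟩
      · exact hae.trans hstep
      · exact (hae.tail ⟨he, hPb, .inl heb⟩).trans hstep

theorem TransGen.restrict_of_sup [IsTrans α r] (hd : ∀ x y, d x y → P x ∧ P y)
    (h : TransGen (fun x y => r x y ∨ d x y) a b) (ha : P a) (hb : P b) :
    TransGen (fun x y => P x ∧ P y ∧ (r x y ∨ d x y)) a b := by
  rcases h.or_exists_restrict_of_sup hd ha with hab | ⟨c, hc, hac, rfl | hcb⟩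
  · exact .single ⟨ha, hb, .inl hab⟩
  · exact hac
  · exact hac.tail ⟨hc, hb, .inl hcb⟩

end Relation

open Function Relation

section Snapshot

variable {E ι : Type*} {Wr : ι → Set E} {Sc : Set E} {rf hb : E → E → Prop} {a b s : E}

/-- The axioms of a Snapshot history; `hb` is happens-before `⊲`, `Wr i` the set `𝕎ᵢ`. -/
structure IsSnapshotHistory (Wr : ι → Set E) (Sc : Set E) (rf hb : E → E → Prop) : Prop where
  hb_trans : ∀ {a b c}, hb a b → hb b c → hb a c
  hb_irrefl : ∀ a, ¬ hb a a
  hb_of_rf : ∀ {w s}, rf w s → hb w s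
  io : ∀ s ∈ Sc, ∀ i, ∃ w ∈ Wr i, rf w s
  no_write_between : ∀ i, ∀ w ∈ Wr i, ∀ s ∈ Sc, rf w s → ¬ ∃ w' ∈ Wr i, hb w w' ∧ hb w' s
  rf_unique : ∀ i, ∀ w ∈ Wr i, ∀ w' ∈ Wr i, ∀ s, rf w s → rf w' s → w = w'
  write_total : ∀ i, ∀ w ∈ Wr i, ∀ w' ∈ Wr i, w ≠ w' → hb w w' ∨ hb w' w
  monotone : ∀ i j, ∀ wi ∈ Wr i, ∀ wj ∈ Wr j, ∀ wi' ∈ Wr i, ∀ wj' ∈ Wr j,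
    ∀ s ∈ Sc, ∀ s' ∈ Sc, rf wi s → rf wj s → rf wi' s' → rf wj' s' → hb wi wi' → ¬ hb wj' wj
  disjoint : Pairwise (Disjoint on Wr)

def Sees (Wr : ι → Set E) (rf hb : E → E → Prop) (s w : E) : Prop :=
  ∃ i, w ∈ Wr i ∧ ∃ u ∈ Wr i, rf u s ∧ (w = u ∨ hb w u)

def WriterStep (Wr : ι → Set E) (Sc : Set E) (rf hb : E → E → Prop) (a b : E) : Prop :=
  (∃ i, a ∈ Wr i) ∧ (∃ i, b ∈ Wr i) ∧ (hb a b ∨ wrDiff Wr Sc rf hb a b)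

theorem wrDiff.isWrite (h : wrDiff Wr Sc rf hb a b) : (∃ i, a ∈ Wr i) ∧ ∃ i, b ∈ Wr i :=
  let ⟨i, j, _, ha, hb', _⟩ := h
  ⟨⟨i, ha⟩, ⟨j, hb'⟩⟩

namespace IsSnapshotHistory

theorem index_eq (H : IsSnapshotHistory Wr Sc rf hb) {i j : ι} (hi : a ∈ Wr i) (hj : a ∈ Wr j) :
    i = j :=
  subsingleton_setOfPred_mem_iff_pairwise_disjoint.2 H.disjoint a hi hj

theorem sees_of_forall_not_hb (H : IsSnapshotHistory Wr Sc rf hb) {i : ι} (hs : s ∈ Sc)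
    (ha : a ∈ Wr i) (h : ∀ v ∈ Wr i, rf v s → ¬ hb v a) : Sees Wr rf hb s a := by
  obtain ⟨v, hv, hvs⟩ := H.io s hs i
  refine ⟨i, ha, v, hv, hvs, ?_⟩
  by_cases hav : a = v
  · exact .inl hav
  · exact .inr ((H.write_total i a ha v hv hav).resolve_right (h v hv hvs))

theorem sees_of_hb (H : IsSnapshotHistory Wr Sc rf hb) {i : ι} (hs : s ∈ Sc) (ha : a ∈ Wr i)
    (hab : hb a b) (hsb : Sees Wr rf hb s b) : Sees Wr rf hb s a := by
  obtain ⟨-, -, u, -, hus, hbu⟩ := hsb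
  have has : hb a s := H.hb_trans (hbu.elim (· ▸ hab) (H.hb_trans hab)) (H.hb_of_rf hus)
  exact H.sees_of_forall_not_hb hs ha fun v hv hvs hva =>
    H.no_write_between i v hv s hs hvs ⟨a, ha, hva, has⟩

theorem sees_of_wrDiff (H : IsSnapshotHistory Wr Sc rf hb) (hs : s ∈ Sc)
    (hab : wrDiff Wr Sc rf hb a b) (hsb : Sees Wr rf hb s b) : Sees Wr rf hb s a := by
  obtain ⟨i, j, -, ha, hbj, w, hw, s', hs', has', hws', hwb⟩ := hab
  obtain ⟨j', hbj', u, hu, hus, hbu⟩ := hsb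
  obtain rfl : j' = j := H.index_eq hbj' hbj
  have hwu : hb w u := hbu.elim (· ▸ hwb) (H.hb_trans hwb)
  exact H.sees_of_forall_not_hb hs ha fun v hv hvs =>
    H.monotone j' i w hw a ha u hu v hv s' hs' s hs hws' has' hus hvs hwu

theorem sees_of_writerStep (H : IsSnapshotHistory Wr Sc rf hb) (hs : s ∈ Sc)
    (hab : WriterStep Wr Sc rf hb a b) (hsb : Sees Wr rf hb s b) : Sees Wr rf hb s a := by
  obtain ⟨⟨i, ha⟩, -, hab | hab⟩ := hab
  · exact H.sees_of_hb hs ha hab hsb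
  · exact H.sees_of_wrDiff hs hab hsb

theorem sees_of_transGen_writerStep (H : IsSnapshotHistory Wr Sc rf hb) (hs : s ∈ Sc)
    (hab : TransGen (WriterStep Wr Sc rf hb) a b) (hsb : Sees Wr rf hb s b) :
    Sees Wr rf hb s a := by
  induction hab with
  | single hab => exact H.sees_of_writerStep hs hab hsb
  | tail _ hbc ih => exact ih (H.sees_of_writerStep hs hbc hsb)

theorem exists_sees_not_sees_of_wrDiff (H : IsSnapshotHistory Wr Sc rf hb)
    (hab : wrDiff Wr Sc rf hb a b) : ∃ s ∈ Sc, Sees Wr rf hb s a ∧ ¬ Sees Wr rf hb s b := by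
  obtain ⟨i, j, -, ha, hbj, w, hw, s, hs, has, hws, hwb⟩ := hab
  refine ⟨s, hs, ⟨i, ha, a, ha, has, .inl rfl⟩, ?_⟩
  rintro ⟨j', hbj', u, hu, hus, hbu⟩
  obtain rfl : j' = j := H.index_eq hbj' hbj
  obtain rfl : u = w := H.rf_unique j' u hu w hw s hus hws
  exact H.hb_irrefl u (hbu.elim (· ▸ hwb) (H.hb_trans hwb))

theorem hb_or_exists_sees_not_sees_of_transGen_writerStep (H : IsSnapshotHistory Wr Sc rf hb)
    (hab : TransGen (WriterStep Wr Sc rf hb) a b) :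
    hb a b ∨ ∃ s ∈ Sc, Sees Wr rf hb s a ∧ ¬ Sees Wr rf hb s b := by
  induction hab with
  | single hab => exact hab.2.2.imp_right H.exists_sees_not_sees_of_wrDiff
  | tail hab hbc ih =>
    rcases ih with hab_hb | ⟨s, hs, hsa, hsb⟩
    · rcases hbc.2.2 with hbc | hbc
      · exact .inl (H.hb_trans hab_hb hbc)
      · obtain ⟨s, hs, hsb, hsc⟩ := H.exists_sees_not_sees_of_wrDiff hbc
        exact .inr ⟨s, hs, H.sees_of_transGen_writerStep hs hab hsb, hsc⟩
    · exact .inr ⟨s, hs, hsa, fun hsc => hsb (H.sees_of_writerStep hs hbc hsc)⟩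

theorem not_transGen_writerStep_self (H : IsSnapshotHistory Wr Sc rf hb) (a : E) :
    ¬ TransGen (WriterStep Wr Sc rf hb) a a := fun h =>
  (H.hb_or_exists_sees_not_sees_of_transGen_writerStep h).elim (H.hb_irrefl a)
    fun ⟨_, _, hsa, hsa'⟩ => hsa' hsa

end IsSnapshotHistory

end Snapshot

theorem writerOrder_strictPartialOrder_general {E ι : Type*} (Wr : ι → Set E) (Sc : Set E)
    (rb prec rf hb : E → E → Prop)
    (hhb : hb = Relation.TransGen (fun a b => rb a b ∨ prec a b))
    (hrf_prec : ∀ a b, rf a b → prec a b)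
    (hirr : Irreflexive hb)
    (hio : ∀ s ∈ Sc, ∀ i, ∃ w ∈ Wr i, rf w s)
    (hnwb : ∀ i, ∀ w ∈ Wr i, ∀ s ∈ Sc, rf w s →
        ¬ ∃ w' ∈ Wr i, hb w w' ∧ hb w' s)
    (huniq : ∀ i, ∀ w ∈ Wr i, ∀ w' ∈ Wr i, ∀ s, rf w s → rf w' s → w = w')
    (htot : ∀ i, ∀ w ∈ Wr i, ∀ w' ∈ Wr i, w ≠ w' → hb w w' ∨ hb w' w)
    (hmono : ∀ i j, ∀ wi ∈ Wr i, ∀ wj ∈ Wr j, ∀ wi' ∈ Wr i, ∀ wj' ∈ Wr j,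
        ∀ s ∈ Sc, ∀ s' ∈ Sc, rf wi s → rf wj s → rf wi' s' → rf wj' s' →
        hb wi wi' → ¬ hb wj' wj)
    (hdisj : ∀ i j, i ≠ j → Disjoint (Wr i) (Wr j)) :
    Transitive (Relation.TransGen (fun a b => hb a b ∨ wrDiff Wr Sc rf hb a b)) ∧
    ∀ w, (∃ i, w ∈ Wr i) →
      ¬ Relation.TransGen (fun a b => hb a b ∨ wrDiff Wr Sc rf hb a b) w w := by
  subst hhb
  have H : IsSnapshotHistory Wr Sc rf (TransGen fun a b => rb a b ∨ prec a b) :=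
    { hb_trans := TransGen.trans
      hb_irrefl := hirr
      hb_of_rf := fun h => .single (.inr (hrf_prec _ _ h))
      io := hio
      no_write_between := hnwb
      rf_unique := huniq
      write_total := htot
      monotone := hmono
      disjoint := hdisj }
  refine ⟨fun _ _ _ => TransGen.trans, fun w hw hcyc => H.not_transGen_writerStep_self w ?_⟩
  exact hcyc.restrict_of_sup (fun _ _ => wrDiff.isWrite) hw hw

/-- The writer order `⊲_w = (⊲ ∪ wrDiff)⁺` is a strict partial order
(transitive and irreflexive) on the writes of a Snapshot history. -/
theorem writerOrder_strictPartialOrder {E ι : Type*} (Wr : ι → Set E) (Sc : Set E)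
    (rb prec rf hb : E → E → Prop)
    (hhb : hb = Relation.TransGen (fun a b => rb a b ∨ prec a b))
    (hrf_prec : ∀ a b, rf a b → prec a b)
    (hirr : Irreflexive hb)
    (hio : ∀ s ∈ Sc, ∀ i, ∃ w ∈ Wr i, rf w s)
    (hnwb : ∀ i, ∀ w ∈ Wr i, ∀ s ∈ Sc, rf w s →
        ¬ ∃ w' ∈ Wr i, hb w w' ∧ hb w' s)
    (huniq : ∀ i, ∀ w ∈ Wr i, ∀ w' ∈ Wr i, ∀ s, rf w s → rf w' s → w = w')
    (htot : ∀ i, ∀ w ∈ Wr i, ∀ w' ∈ Wr i, w ≠ w' → hb w w' ∨ hb w' w)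
    (hmono : ∀ i j, ∀ wi ∈ Wr i, ∀ wj ∈ Wr j, ∀ wi' ∈ Wr i, ∀ wj' ∈ Wr j,
        ∀ s ∈ Sc, ∀ s' ∈ Sc, rf wi s → rf wj s → rf wi' s' → rf wj' s' →
        hb wi wi' → ¬ hb wj' wj)
    (hdisj : ∀ i j, i ≠ j → Disjoint (Wr i) (Wr j))
    (hrf_dom : ∀ w s, rf w s → (∃ i, w ∈ Wr i) ∧ s ∈ Sc) :
    Transitive (Relation.TransGen (fun a b => hb a b ∨ wrDiff Wr Sc rf hb a b)) ∧
    ∀ w, (∃ i, w ∈ Wr i) →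
      ¬ Relation.TransGen (fun a b => hb a b ∨ wrDiff Wr Sc rf hb a b) w w :=
  writerOrder_strictPartialOrder_general Wr Sc rb prec rf hb hhb hrf_prec hirr hio hnwb huniq htot
    hmono hdisj
end

section
/- (Existence of a latest-in-time event) Let a finite nonempty Snapshot history be given, and let <_w be any strict total order on the writes extending the writer order ⊲_w. Then there exists a maximal candidate: either a write w that is <_w-greatest among all writes, ⊲-maximal among all events, and observed by no scan; or a scan s that is ⊲-maximal and such that for each index i there is a write wᵢ with wᵢ rf s and wᵢ is the <_w-greatest element of 𝕎ᵢ. -/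
/-- The writer order `⊲_w = (⊲ ∪ wrDiff)⁺`. -/
def writerOrder {E ι : Type*} (Wr : ι → Set E) (Sc : Set E)
    (rf hb : E → E → Prop) : E → E → Prop :=
  Relation.TransGen (fun a b => hb a b ∨ wrDiff Wr Sc rf hb a b)

open Set

theorem Set.Finite.exists_forall_not_rel {α : Type*} {r : α → α → Prop} {s : Set α}
    (hs : s.Finite) (hne : s.Nonempty) (htrans : ∀ a b c, r a b → r b c → r a c)
    (hirr : ∀ a ∈ s, ¬ r a a) :
    ∃ m ∈ s, ∀ e ∈ s, ¬ r m e := by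
  have : Finite s := hs
  let r' : s → s → Prop := fun a b => r b a
  have : IsTrans s r' := ⟨fun _ _ _ hab hbc => htrans _ _ _ hbc hab⟩
  have : Std.Irrefl r' := ⟨fun a => hirr a a.2⟩
  obtain ⟨m, -, hm⟩ :=
    (Finite.wellFounded_of_trans_of_irrefl r').has_min univ ⟨⟨_, hne.some_mem⟩, trivial⟩
  exact ⟨m, m.2, fun e he => hm ⟨e, he⟩ trivial⟩

section Snapshot

variable {E ι : Type*} {Wr : ι → Set E} {Sc : Set E} {rf hb : E → E → Prop}

theorem rf_of_hb_of_forall_not_hb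
    (hnwb : ∀ i, ∀ w ∈ Wr i, ∀ s ∈ Sc, rf w s → ¬ ∃ w' ∈ Wr i, hb w w' ∧ hb w' s)
    (htot : ∀ i, ∀ w ∈ Wr i, ∀ w' ∈ Wr i, w ≠ w' → hb w w' ∨ hb w' w)
    {i : ι} {w s : E} (hw : w ∈ Wr i) (hw_top : ∀ w' ∈ Wr i, ¬ hb w w') (hs : s ∈ Sc)
    (hread : ∃ w' ∈ Wr i, rf w' s) (hws : hb w s) : rf w s := by
  obtain ⟨w', hw', hrf⟩ := hread
  obtain rfl | hne := eq_or_ne w' w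
  · exact hrf
  rcases htot i w' hw' w hw hne with h | h
  · exact absurd ⟨w, hw, h, hws⟩ (hnwb i w' hw' s hs hrf)
  · exact absurd h (hw_top w' hw')

theorem forall_not_hb_of_forall_not_rf (htrans : ∀ a b c, hb a b → hb b c → hb a c)
    (hio : ∀ s ∈ Sc, ∀ i, ∃ w ∈ Wr i, rf w s)
    (hnwb : ∀ i, ∀ w ∈ Wr i, ∀ s ∈ Sc, rf w s → ¬ ∃ w' ∈ Wr i, hb w w' ∧ hb w' s)
    (htot : ∀ i, ∀ w ∈ Wr i, ∀ w' ∈ Wr i, w ≠ w' → hb w w' ∨ hb w' w)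
    {i : ι} {w x : E} (hw : w ∈ Wr i) (hw_top : ∀ j, ∀ w' ∈ Wr j, ¬ hb w w')
    (hwx : x = w ∨ hb w x) (hx_top : ∀ s ∈ Sc, hb x s → ¬ rf w s) :
    ∀ e ∈ Sc ∪ ⋃ k, Wr k, ¬ hb x e := by
  have hw_hb : ∀ {e}, hb x e → hb w e := by
    rcases hwx with rfl | h
    exacts [id, htrans _ _ _ h]
  rintro e (he | he) hxe
  · exact hx_top e he hxe <| rf_of_hb_of_forall_not_hb hnwb htot hw (hw_top i) he
      (hio e he i) (hw_hb hxe)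
  · obtain ⟨j, hj⟩ := mem_iUnion.1 he
    exact hw_top j e hj (hw_hb hxe)

theorem forall_ltw_of_rf_of_rf_greatest (ltw : E → E → Prop)
    (huniq : ∀ i, ∀ w ∈ Wr i, ∀ w' ∈ Wr i, ∀ s, rf w s → rf w' s → w = w')
    (htot : ∀ i, ∀ w ∈ Wr i, ∀ w' ∈ Wr i, w ≠ w' → hb w w' ∨ hb w' w)
    (hltw_ext : ∀ w w', (∃ i, w ∈ Wr i) → (∃ j, w' ∈ Wr j) →
        writerOrder Wr Sc rf hb w w' → ltw w w')
    {i₀ i : ι} {w wᵢ s : E} (hw : w ∈ Wr i₀) (hw_top : ∀ w' ∈ ⋃ j, Wr j, ¬ ltw w w')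
    (hs : s ∈ Sc) (hws : rf w s) (hwᵢ : wᵢ ∈ Wr i) (hwᵢs : rf wᵢ s) :
    ∀ w' ∈ Wr i, w' ≠ wᵢ → ltw w' wᵢ := by
  intro w' hw' hne
  rcases htot i w' hw' wᵢ hwᵢ hne with h | h
  · exact hltw_ext w' wᵢ ⟨i, hw'⟩ ⟨i, hwᵢ⟩ (.single (.inl h))
  refine absurd (hltw_ext w w' ⟨i₀, hw⟩ ⟨i, hw'⟩ (.single ?_)) (hw_top w' (mem_iUnion.2 ⟨i, hw'⟩))
  obtain rfl | hi := eq_or_ne i₀ i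
  · obtain rfl := huniq i₀ w hw wᵢ hwᵢ s hws hwᵢs
    exact .inl h
  · exact .inr ⟨i₀, i, hi, hw, hw', wᵢ, hwᵢ, s, hs, hws, hwᵢs, h⟩

end Snapshot

theorem exists_maximal_candidate_general {E ι : Type*}
    (Wr : ι → Set E) (Sc : Set E)
    (rb prec rf hb : E → E → Prop)
    (hhb : hb = Relation.TransGen (fun a b => rb a b ∨ prec a b))
    (hrf_prec : ∀ a b, rf a b → prec a b)
    (hirr : Irreflexive hb)
    (hio : ∀ s ∈ Sc, ∀ i, ∃ w ∈ Wr i, rf w s)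
    (hnwb : ∀ i, ∀ w ∈ Wr i, ∀ s ∈ Sc, rf w s →
        ¬ ∃ w' ∈ Wr i, hb w w' ∧ hb w' s)
    (huniq : ∀ i, ∀ w ∈ Wr i, ∀ w' ∈ Wr i, ∀ s, rf w s → rf w' s → w = w')
    (htot : ∀ i, ∀ w ∈ Wr i, ∀ w' ∈ Wr i, w ≠ w' → hb w w' ∨ hb w' w)
    (hfin : (Sc ∪ ⋃ i, Wr i).Finite)
    (hne : (Sc ∪ ⋃ i, Wr i).Nonempty)
    (ltw : E → E → Prop)
    (hltw_irr : ∀ w, (∃ i, w ∈ Wr i) → ¬ ltw w w)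
    (hltw_trans : ∀ a b c, ltw a b → ltw b c → ltw a c)
    (hltw_tot : ∀ w w', (∃ i, w ∈ Wr i) → (∃ j, w' ∈ Wr j) → w ≠ w' →
        ltw w w' ∨ ltw w' w)
    (hltw_ext : ∀ w w', (∃ i, w ∈ Wr i) → (∃ j, w' ∈ Wr j) →
        writerOrder Wr Sc rf hb w w' → ltw w w') :
    (∃ i, ∃ w ∈ Wr i,
        (∀ j, ∀ w' ∈ Wr j, w' ≠ w → ltw w' w) ∧
        (∀ e ∈ Sc ∪ ⋃ k, Wr k, ¬ hb w e) ∧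
        (∀ s ∈ Sc, ¬ rf w s)) ∨
    (∃ s ∈ Sc,
        (∀ e ∈ Sc ∪ ⋃ k, Wr k, ¬ hb s e) ∧
        (∀ i, ∃ w ∈ Wr i, rf w s ∧ ∀ w' ∈ Wr i, w' ≠ w → ltw w' w)) := by
  have htrans : ∀ a b c, hb a b → hb b c → hb a c := hhb ▸ fun _ _ _ => .trans
  rcases (⋃ i, Wr i).eq_empty_or_nonempty with hW | hW
  · have hno : ∀ e, e ∉ ⋃ i, Wr i := fun e => hW ▸ notMem_empty e
    obtain ⟨s, hs, hs_top⟩ := (hfin.subset subset_union_left).exists_forall_not_rel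
      (hne.mono fun e he => he.resolve_right (hno e)) htrans (fun a _ => hirr a)
    refine .inr ⟨s, hs, fun e he => hs_top e (he.resolve_right (hno e)), fun i => ?_⟩
    obtain ⟨w, hw, -⟩ := hio s hs i
    exact absurd (mem_iUnion.2 ⟨i, hw⟩) (hno w)
  obtain ⟨w, hwW, hw_top⟩ :=
    (hfin.subset subset_union_right).exists_forall_not_rel hW hltw_trans
      fun a ha => hltw_irr a (mem_iUnion.1 ha)
  obtain ⟨i₀, hw⟩ := mem_iUnion.1 hwW
  have hw_hb_top : ∀ j, ∀ w' ∈ Wr j, ¬ hb w w' := fun j w' hw' h =>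
    hw_top w' (mem_iUnion.2 ⟨j, hw'⟩) (hltw_ext w w' ⟨i₀, hw⟩ ⟨j, hw'⟩ (.single (.inl h)))
  by_cases hread : ∃ s ∈ Sc, rf w s
  · obtain ⟨s, ⟨hs, hws⟩, hs_top⟩ :=
      (hfin.subset fun t ht => .inl ht.1).exists_forall_not_rel
        (s := {s | s ∈ Sc ∧ rf w s}) hread htrans (fun a _ => hirr a)
    have hws_hb : hb w s := hhb ▸ .single (.inr (hrf_prec w s hws))
    refine .inr ⟨s, hs, forall_not_hb_of_forall_not_rf htrans hio hnwb htot hw hw_hb_top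
      (.inr hws_hb) (fun t ht hst hwt => hs_top t ⟨ht, hwt⟩ hst), fun i => ?_⟩
    obtain ⟨wᵢ, hwᵢ, hwᵢs⟩ := hio s hs i
    exact ⟨wᵢ, hwᵢ, hwᵢs,
      forall_ltw_of_rf_of_rf_greatest ltw huniq htot hltw_ext hw hw_top hs hws hwᵢ hwᵢs⟩
  · push Not at hread
    refine .inl ⟨i₀, w, hw, fun j w' hw' hne' => ?_, forall_not_hb_of_forall_not_rf htrans hio
      hnwb htot hw hw_hb_top (.inl rfl) (fun t ht _ => hread t ht), hread⟩
    exact (hltw_tot w' w ⟨j, hw'⟩ ⟨i₀, hw⟩ hne').resolve_right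
      (hw_top w' (mem_iUnion.2 ⟨j, hw'⟩))

/-- (Existence of a latest-in-time event) In a finite nonempty Snapshot
history, for any strict total order `<_w` on the writes extending `⊲_w`,
there exists a maximal candidate: either a write `w` that is `<_w`-greatest
among all writes, `⊲`-maximal among all events, and observed by no scan; or a
scan `s` that is `⊲`-maximal and such that for each index `i` there is a write
`wᵢ` with `wᵢ rf s` and `wᵢ` the `<_w`-greatest element of `𝕎ᵢ`. -/
theorem exists_maximal_candidate {E ι : Type*} [Fintype ι]
    (Wr : ι → Set E) (Sc : Set E)
    (rb prec rf hb : E → E → Prop)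
    (hhb : hb = Relation.TransGen (fun a b => rb a b ∨ prec a b))
    (hrf_prec : ∀ a b, rf a b → prec a b)
    (hirr : Irreflexive hb)
    (hio : ∀ s ∈ Sc, ∀ i, ∃ w ∈ Wr i, rf w s)
    (hnwb : ∀ i, ∀ w ∈ Wr i, ∀ s ∈ Sc, rf w s →
        ¬ ∃ w' ∈ Wr i, hb w w' ∧ hb w' s)
    (huniq : ∀ i, ∀ w ∈ Wr i, ∀ w' ∈ Wr i, ∀ s, rf w s → rf w' s → w = w')
    (htot : ∀ i, ∀ w ∈ Wr i, ∀ w' ∈ Wr i, w ≠ w' → hb w w' ∨ hb w' w)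
    (hdisj : ∀ i j, i ≠ j → Disjoint (Wr i) (Wr j))
    (hrf_dom : ∀ w s, rf w s → (∃ i, w ∈ Wr i) ∧ s ∈ Sc)
    (hfin : (Sc ∪ ⋃ i, Wr i).Finite)
    (hne : (Sc ∪ ⋃ i, Wr i).Nonempty)
    (ltw : E → E → Prop)
    (hltw_irr : ∀ w, (∃ i, w ∈ Wr i) → ¬ ltw w w)
    (hltw_trans : ∀ a b c, ltw a b → ltw b c → ltw a c)
    (hltw_tot : ∀ w w', (∃ i, w ∈ Wr i) → (∃ j, w' ∈ Wr j) → w ≠ w' →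
        ltw w w' ∨ ltw w' w)
    (hltw_ext : ∀ w w', (∃ i, w ∈ Wr i) → (∃ j, w' ∈ Wr j) →
        writerOrder Wr Sc rf hb w w' → ltw w w') :
    (∃ i, ∃ w ∈ Wr i,
        (∀ j, ∀ w' ∈ Wr j, w' ≠ w → ltw w' w) ∧
        (∀ e ∈ Sc ∪ ⋃ k, Wr k, ¬ hb w e) ∧
        (∀ s ∈ Sc, ¬ rf w s)) ∨
    (∃ s ∈ Sc,
        (∀ e ∈ Sc ∪ ⋃ k, Wr k, ¬ hb s e) ∧
        (∀ i, ∃ w ∈ Wr i, rf w s ∧ ∀ w' ∈ Wr i, w' ≠ w → ltw w' w)) :=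
  exists_maximal_candidate_general Wr Sc rb prec rf hb hhb hrf_prec hirr hio hnwb huniq htot hfin
    hne ltw hltw_irr hltw_trans hltw_tot hltw_ext
end

section
/- (Monotonicity from total scan order) Suppose scans are totally ordered: for any two scans s ≠ s', either s ⊏ s' or s' ⊏ s. Suppose further rf-uniqueness (a scan observes at most one write per index) and the no-write-between property hold. Then the monotonicity property holds: if wᵢ rf s, w_j rf s, w'ᵢ rf s', w'_j rf s', and wᵢ ⊲ w'ᵢ, then ¬(w'_j ⊲ w_j). -/
/-!
Two distinct scans are ordered by returns-before, and since a scan's writes precede it, a write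
read by the earlier scan happens before the later scan. So if the scans read `wᵢ ⊲ w'ᵢ` and
`w'ⱼ ⊲ wⱼ`, then the later of the two scans finds, between the write it read and itself, the
other write of the same index, which no-write-between forbids. If the scans coincide,
rf-uniqueness gives `wᵢ = w'ᵢ`, contradicting irreflexivity.
-/

open Relation

section

variable {E : Type*} {rb prec rf : E → E → Prop}

theorem transGen_of_rf_of_rb (hrf_prec : ∀ a b, rf a b → prec a b) {w s s' : E}
    (hws : rf w s) (hss' : rb s s') : TransGen (fun a b => rb a b ∨ prec a b) w s' :=
  .tail (.single (.inr (hrf_prec w s hws))) (.inl hss')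

theorem not_rb_of_rf_of_transGen {W Sc : Set E} (hrf_prec : ∀ a b, rf a b → prec a b)
    (hnwb : ∀ w ∈ W, ∀ s ∈ Sc, rf w s →
      ¬ ∃ w' ∈ W, TransGen (fun a b => rb a b ∨ prec a b) w w' ∧
        TransGen (fun a b => rb a b ∨ prec a b) w' s)
    {w w' s s' : E} (hw : w ∈ W) (hw' : w' ∈ W) (hs : s ∈ Sc) (hws : rf w s) (hw's' : rf w' s')
    (hww' : TransGen (fun a b => rb a b ∨ prec a b) w w') : ¬ rb s' s := fun hs's =>
  hnwb w hw s hs hws ⟨w', hw', hww', transGen_of_rf_of_rb hrf_prec hw's' hs's⟩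

end

/-- (Monotonicity from total scan order) If scans are totally ordered by
returns-before, and rf-uniqueness and no-write-between hold, then the
monotonicity property holds: if `wᵢ rf s`, `w_j rf s`, `w'ᵢ rf s'`,
`w'_j rf s'` and `wᵢ ⊲ w'ᵢ`, then `¬ (w'_j ⊲ w_j)`. -/
theorem monotonicity_of_scan_totality {E ι : Type*}
    (Wr : ι → Set E) (Sc : Set E)
    (rb prec rf hb : E → E → Prop)
    (hhb : hb = Relation.TransGen (fun a b => rb a b ∨ prec a b))
    (hrf_prec : ∀ a b, rf a b → prec a b)
    (hirr : Irreflexive hb)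
    (hscan_tot : ∀ s ∈ Sc, ∀ s' ∈ Sc, s ≠ s' → rb s s' ∨ rb s' s)
    (huniq : ∀ i, ∀ w ∈ Wr i, ∀ w' ∈ Wr i, ∀ s, rf w s → rf w' s → w = w')
    (hnwb : ∀ i, ∀ w ∈ Wr i, ∀ s ∈ Sc, rf w s →
        ¬ ∃ w' ∈ Wr i, hb w w' ∧ hb w' s) :
    ∀ i j, ∀ wi ∈ Wr i, ∀ wj ∈ Wr j, ∀ wi' ∈ Wr i, ∀ wj' ∈ Wr j,
      ∀ s ∈ Sc, ∀ s' ∈ Sc, rf wi s → rf wj s → rf wi' s' → rf wj' s' →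
      hb wi wi' → ¬ hb wj' wj := by
  intro i j wi hwi wj hwj wi' hwi' wj' hwj' s hs s' hs' hwi_s hwj_s hwi'_s' hwj'_s' hwi_wi'
    hwj'_wj
  subst hhb
  rcases eq_or_ne s s' with rfl | hne
  · exact hirr wi (huniq i wi hwi wi' hwi' s hwi_s hwi'_s' ▸ hwi_wi')
  rcases hscan_tot s hs s' hs' hne with hss' | hs's
  · exact not_rb_of_rf_of_transGen hrf_prec (hnwb j) hwj' hwj hs' hwj'_s' hwj_s hwj'_wj hss'
  · exact not_rb_of_rf_of_transGen hrf_prec (hnwb i) hwi hwi' hs hwi_s hwi'_s' hwi_wi' hs's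
end

section
/- (Afek monotonicity core) Suppose for virtual scans σ, σ' we have rep events with a_σ,j ⊏ b_σ,i and a_σ',i ⊏ b_σ',j (each virtual scan's first-pass reads return before its second-pass reads), the register axiom no-write-between, and rep writes with wa(w_j) rf a_σ,j, wa(w_j) rf b_σ,j, wa(w'_j) rf a_σ',j, wa(w'_j) rf b_σ',j, and similarly for index i. If wa(w_i) ⊲ wa(w'_i) then ¬(wa(w'_j) ⊲ wa(w_j)). -/
/-!
The interval-order property, applied to `aσj ⊏ bσi` and `aσ'i ⊏ bσ'j`, yields `aσj ⊏ bσ'j` or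
`aσ'i ⊏ bσi`. In the first case `waj' ⊲ waj ⊲ aσj ⊏ bσ'j` puts a write to cell `j` between `waj'`
and the read `bσ'j` of `waj'`; in the second, `wai ⊲ wai' ⊲ aσ'i ⊏ bσi` does the same for cell `i`.
-/

def NoWriteBetween {E : Type*} (hb rf : E → E → Prop) (W : Set E) : Prop :=
  ∀ w r, w ∈ W → rf w r → ¬ ∃ w'' ∈ W, hb w w'' ∧ hb w'' r

theorem NoWriteBetween.not_hb_of_rf_of_hb {E : Type*} {hb rf : E → E → Prop} {W : Set E}
    (hnwb : NoWriteBetween hb rf W) (htrans : Transitive hb) (hrf_hb : ∀ a b, rf a b → hb a b)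
    {w w' a r : E} (hw : w ∈ W) (hw' : w' ∈ W) (hwr : rf w r) (hw'a : rf w' a) (har : hb a r) :
    ¬ hb w w' :=
  fun hww' => hnwb w r hw hwr ⟨w', hw', hww', htrans (hrf_hb _ _ hw'a) har⟩

theorem afek_monotonicity_core_general {E : Type*} (rb hb rf : E → E → Prop)
    (hinterval : ∀ a b c d, rb a b → rb c d → rb a d ∨ rb c b)
    (htrans : Transitive hb)
    (hrb_hb : ∀ a b, rb a b → hb a b)
    (hrf_hb : ∀ a b, rf a b → hb a b)
    (Wi Wj : Set E)
    (wai wai' waj waj' : E)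
    (aσj bσi aσ'i bσ'j : E)
    (hwi : wai ∈ Wi) (hwi' : wai' ∈ Wi) (hwj : waj ∈ Wj) (hwj' : waj' ∈ Wj)
    -- each scan's first-pass reads return before its second-pass reads
    (hs3 : rb aσj bσi)
    (hs2' : rb aσ'i bσ'j)
    -- double-read property: each scan observes the same write in both passes
    (hr1 : rf waj aσj)
    (hr4 : rf wai bσi)
    (hr6 : rf waj' bσ'j)
    (hr7 : rf wai' aσ'i)
    -- no-write-between, per cell
    (hnwbJ : ∀ w r, w ∈ Wj → rf w r → ¬ ∃ w'' ∈ Wj, hb w w'' ∧ hb w'' r)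
    (hnwbI : ∀ w r, w ∈ Wi → rf w r → ¬ ∃ w'' ∈ Wi, hb w w'' ∧ hb w'' r) :
    hb wai wai' → ¬ hb waj' waj := by
  intro hii hjj
  rcases hinterval aσj bσi aσ'i bσ'j hs3 hs2' with hσj_σ'j | hσ'i_σi
  · exact NoWriteBetween.not_hb_of_rf_of_hb hnwbJ htrans hrf_hb hwj'
      hwj hr6 hr1 (hrb_hb _ _ hσj_σ'j) hjj
  · exact NoWriteBetween.not_hb_of_rf_of_hb hnwbI htrans hrf_hb hwi
      hwi' hr4 hr7 (hrb_hb _ _ hσ'i_σi) hii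

/-- (Afek monotonicity core) For virtual scans `σ`, `σ'` whose first-pass
reads return before their second-pass reads, with the no-write-between axiom
and the double-read property (each scan observes the same write in both
passes), if `wa wᵢ ⊲ wa w'ᵢ` then `¬ (wa w'_j ⊲ wa w_j)`. -/
theorem afek_monotonicity_core {E : Type*} (rb hb rf : E → E → Prop)
    (hinterval : ∀ a b c d, rb a b → rb c d → rb a d ∨ rb c b)
    (hirr : Irreflexive hb) (htrans : Transitive hb)
    (hrb_hb : ∀ a b, rb a b → hb a b)
    (hrf_hb : ∀ a b, rf a b → hb a b)
    (Wi Wj : Set E)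
    (wai wai' waj waj' : E)
    (aσi aσj bσi bσj aσ'i aσ'j bσ'i bσ'j : E)
    (hwi : wai ∈ Wi) (hwi' : wai' ∈ Wi) (hwj : waj ∈ Wj) (hwj' : waj' ∈ Wj)
    -- each scan's first-pass reads return before its second-pass reads
    (hs1 : rb aσi bσi) (hs2 : rb aσi bσj) (hs3 : rb aσj bσi) (hs4 : rb aσj bσj)
    (hs1' : rb aσ'i bσ'i) (hs2' : rb aσ'i bσ'j)
    (hs3' : rb aσ'j bσ'i) (hs4' : rb aσ'j bσ'j)
    -- double-read property: each scan observes the same write in both passes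
    (hr1 : rf waj aσj) (hr2 : rf waj bσj)
    (hr3 : rf wai aσi) (hr4 : rf wai bσi)
    (hr5 : rf waj' aσ'j) (hr6 : rf waj' bσ'j)
    (hr7 : rf wai' aσ'i) (hr8 : rf wai' bσ'i)
    -- no-write-between, per cell
    (hnwbJ : ∀ w r, w ∈ Wj → rf w r → ¬ ∃ w'' ∈ Wj, hb w w'' ∧ hb w'' r)
    (hnwbI : ∀ w r, w ∈ Wi → rf w r → ¬ ∃ w'' ∈ Wi, hb w w'' ∧ hb w'' r)
    -- write-totality, per cell
    (htotJ : ∀ w ∈ Wj, ∀ w' ∈ Wj, w ≠ w' → hb w w' ∨ hb w' w)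
    (htotI : ∀ w ∈ Wi, ∀ w' ∈ Wi, w ≠ w' → hb w w' ∨ hb w' w) :
    hb wai wai' → ¬ hb waj' waj :=
  afek_monotonicity_core_general rb hb rf hinterval htrans hrb_hb hrf_hb Wi Wj wai wai' waj waj' aσj
    bσi aσ'i bσ'j hwi hwi' hwj hwj' hs3 hs2' hr1 hr4 hr6 hr7 hnwbJ hnwbI
end
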